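/- arXiv:2505.03288 — 3 statements merged into one kernel-verified Lean document; each statement's English description precedes it below -/
import Mathlib

section
/- Suppose that for every zone z we have S_z > D_z, E_z > 0 and C_z ≤ D_z. Then there exists a strictly feasible (Slater) point: a family x = (x^z_{n,k}) with 0 < x^z_{n,k} < 1 for all n, k, z such that all four market constraints hold strictly, i.e. ∑_{n∈𝒩} ∑_{k=1}^{K_n} x^z_{n,k} Δ_{n,k} > D_z for every zone z, ∑_{z∈𝒵} x^z_{n,k} < 1 for every producer n and bid k, ∑_{n : z(n)=z} ∑_{k=1}^{K_n} ∑_{z'≠z} x^{z'}_{n,k} Δ_{n,k} < E_z for every zone z, and ∑_{n : z(n)=z} ∑_{k=1}^{K_n} x^z_{n,k} Δ_{n,k} > C_z for every zone z. (Lemma 1, condition (i): Slater's constraint qualification when each zone can satisfy its own demand.) -/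
/-- Lemma 1, condition (i): Slater's constraint qualification holds when each
zone can strictly satisfy its own demand (`S_z > D_z`), export limits are
positive and core portions do not exceed demands: there is a strictly feasible
point for the market operator's constraints. -/
theorem slater_condition_i
    {Z N : Type*} [Fintype Z] [Fintype N] [DecidableEq Z]
    (zone : N → Z) (K : N → ℕ)
    (Δ : (n : N) → Fin (K n) → ℝ)
    (D E C : Z → ℝ)
    (hΔ : ∀ n k, 0 ≤ Δ n k)
    (hD : ∀ z, 0 ≤ D z) (hE : ∀ z, 0 ≤ E z) (hC : ∀ z, 0 ≤ C z)
    -- S_z > D_z : each zone can satisfy its own demand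
    (hS : ∀ z, D z < ∑ n ∈ Finset.univ.filter (fun n => zone n = z), ∑ k, Δ n k)
    (hEpos : ∀ z, 0 < E z)
    (hCD : ∀ z, C z ≤ D z) :
    ∃ x : (n : N) → Fin (K n) → Z → ℝ,
      (∀ n k z, 0 < x n k z ∧ x n k z < 1) ∧
      -- strict demand
      (∀ z, D z < ∑ n, ∑ k, x n k z * Δ n k) ∧
      -- strict capacity
      (∀ n, ∀ k : Fin (K n), ∑ z, x n k z < 1) ∧
      -- strict export
      (∀ z, ∑ n ∈ Finset.univ.filter (fun n => zone n = z),
          ∑ k, ∑ z' ∈ Finset.univ.filter (fun z' => z' ≠ z), x n k z' * Δ n k < E z) ∧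
      -- strict core
      (∀ z, C z < ∑ n ∈ Finset.univ.filter (fun n => zone n = z),
          ∑ k, x n k z * Δ n k) := by
  classical
  by_cases hZ : Nonempty Z
  case neg =>
    -- Z is empty: everything is vacuous
    have hZe : IsEmpty Z := not_nonempty_iff.mp hZ
    refine ⟨fun _ _ _ => (1:ℝ)/2, ?_, ?_, ?_, ?_, ?_⟩
    · intro n k z; exact (hZe.false z).elim
    · intro z; exact (hZe.false z).elim
    · intro n k; simp [Finset.univ_eq_empty]
    · intro z; exact (hZe.false z).elim
    · intro z; exact (hZe.false z).elim
  case pos =>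
    set S : Z → ℝ := fun z => ∑ n ∈ Finset.univ.filter (fun n => zone n = z), ∑ k, Δ n k
      with hSdef
    have hSpos : ∀ z, 0 < S z := fun z => lt_of_le_of_lt (hD z) (hS z)
    set t : Z → ℝ := fun z => (D z / S z + 1) / 2 with htdef
    have hdivlt : ∀ z, D z / S z < 1 := fun z => (div_lt_one (hSpos z)).mpr (hS z)
    have hdiv0 : ∀ z, 0 ≤ D z / S z := fun z => div_nonneg (hD z) (hSpos z).le
    have ht0 : ∀ z, 0 < t z := by intro z; have := hdiv0 z; simp only [htdef]; linarith
    have ht1 : ∀ z, t z < 1 := by intro z; have := hdivlt z; simp only [htdef]; linarith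
    have htS : ∀ z, D z < t z * S z := by
      intro z
      have h1 : D z / S z < t z := by have := hdivlt z; simp only [htdef]; linarith
      calc D z = D z / S z * S z := (div_mul_cancel₀ _ (hSpos z).ne').symm
        _ < t z * S z := mul_lt_mul_of_pos_right h1 (hSpos z)
    set m : ℝ := ((Finset.univ : Finset Z).card : ℝ) with hmdef
    have hm1 : 1 ≤ m := by
      have : 0 < (Finset.univ : Finset Z).card := Finset.card_pos.mpr Finset.univ_nonempty
      simp only [hmdef]; exact_mod_cast this
    have hm0 : 0 < m := lt_of_lt_of_le one_pos hm1
    set g : Z → ℝ := fun z => min ((1 - t z) / (2 * m)) (E z / (2 * m * S z)) with hgdef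
    have hg : ∀ z, 0 < g z := by
      intro z
      refine lt_min (div_pos ?_ (by linarith)) (div_pos (hEpos z)
        (mul_pos (mul_pos two_pos hm0) (hSpos z)))
      have := ht1 z; linarith
    have hne : (Finset.univ : Finset Z).Nonempty := Finset.univ_nonempty
    set ε : ℝ := Finset.univ.inf' hne g with hεdef
    have hε0 : 0 < ε := by
      rw [hεdef, Finset.lt_inf'_iff]
      exact fun z _ => hg z
    have hεg : ∀ z, ε ≤ g z := fun z => Finset.inf'_le g (Finset.mem_univ z)
    have hε1 : ∀ z, ε ≤ (1 - t z) / (2 * m) := fun z => (hεg z).trans (min_le_left _ _)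
    have hε2 : ∀ z, ε ≤ E z / (2 * m * S z) := fun z => (hεg z).trans (min_le_right _ _)
    clear_value S t m g ε
    refine ⟨fun n k z => if zone n = z then t z else ε, ?_, ?_, ?_, ?_, ?_⟩
    · -- bounds
      intro n k z
      by_cases h : zone n = z
      · simp [h, ht0 z, ht1 z]
      · have h1 : ε ≤ (1 - t z) / (2 * m) := hε1 z
        have h2 : (1 - t z) / (2 * m) ≤ (1 - t z) / 2 := by
          apply div_le_div_of_nonneg_left (by have := ht1 z; linarith) (by norm_num) (by linarith)
        have := ht0 z
        constructor
        · simp [h, hε0]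
        · simp only [h, if_false]; linarith
    · -- strict demand
      intro z
      have key : (∑ n ∈ Finset.univ.filter (fun n => zone n = z),
          ∑ k, (if zone n = z then t z else ε) * Δ n k) = t z * S z := by
        rw [hSdef, Finset.mul_sum]
        apply Finset.sum_congr rfl
        intro n hn
        rw [Finset.mem_filter] at hn
        rw [Finset.mul_sum]
        exact Finset.sum_congr rfl fun k _ => by rw [if_pos hn.2]
      have hsub : (∑ n ∈ Finset.univ.filter (fun n => zone n = z),
          ∑ k, (if zone n = z then t z else ε) * Δ n k) ≤
          ∑ n, ∑ k, (if zone n = z then t z else ε) * Δ n k := by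
        apply Finset.sum_le_sum_of_subset_of_nonneg (Finset.filter_subset _ _)
        intro n _ _
        apply Finset.sum_nonneg
        intro k _
        apply mul_nonneg _ (hΔ n k)
        by_cases h : zone n = z
        · simp [h, (ht0 z).le]
        · simp [h, hε0.le]
      calc D z < t z * S z := htS z
        _ = _ := key.symm
        _ ≤ _ := hsub
    · -- strict capacity
      intro n k
      have key : (∑ z, if zone n = z then t z else ε) =
          m * ε + (t (zone n) - ε) := by
        have : ∀ z, (if zone n = z then t z else ε) = ε + (if zone n = z then t z - ε else 0) := by
          intro z; by_cases h : zone n = z <;> simp [h]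
        rw [Finset.sum_congr rfl fun z _ => this z, Finset.sum_add_distrib,
          Finset.sum_const, Finset.sum_ite_eq, if_pos (Finset.mem_univ _)]
        simp [hmdef, nsmul_eq_mul]
      rw [key]
      have h1 : ε ≤ (1 - t (zone n)) / (2 * m) := hε1 (zone n)
      have h2 : m * ε ≤ (1 - t (zone n)) / 2 := by
        have := mul_le_mul_of_nonneg_left h1 hm0.le
        calc m * ε ≤ m * ((1 - t (zone n)) / (2 * m)) := this
          _ = (1 - t (zone n)) / 2 := by field_simp
      have := ht1 (zone n)
      linarith
    · -- strict export
      intro z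
      have bound : ∀ n ∈ Finset.univ.filter (fun n => zone n = z), ∀ k,
          (∑ z' ∈ Finset.univ.filter (fun z' => z' ≠ z),
            (if zone n = z' then t z' else ε) * Δ n k) ≤ m * (ε * Δ n k) := by
        intro n hn k
        rw [Finset.mem_filter] at hn
        have : ∀ z' ∈ Finset.univ.filter (fun z' => z' ≠ z),
            (if zone n = z' then t z' else ε) * Δ n k = ε * Δ n k := by
          intro z' hz'
          rw [Finset.mem_filter] at hz'
          rw [if_neg (by rw [hn.2]; exact fun h => hz'.2 h.symm)]
        rw [Finset.sum_congr rfl this, Finset.sum_const, nsmul_eq_mul]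
        apply mul_le_mul_of_nonneg_right _ (mul_nonneg hε0.le (hΔ n k))
        simp only [hmdef]
        exact_mod_cast Finset.card_filter_le _ _
      have total : (∑ n ∈ Finset.univ.filter (fun n => zone n = z),
          ∑ k, ∑ z' ∈ Finset.univ.filter (fun z' => z' ≠ z),
            (if zone n = z' then t z' else ε) * Δ n k) ≤ m * ε * S z := by
        calc _ ≤ ∑ n ∈ Finset.univ.filter (fun n => zone n = z), ∑ k, m * (ε * Δ n k) :=
              Finset.sum_le_sum fun n hn => Finset.sum_le_sum fun k _ => bound n hn k
          _ = m * ε * S z := by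
              rw [hSdef, Finset.mul_sum]
              apply Finset.sum_congr rfl
              intro n _
              rw [Finset.mul_sum]
              exact Finset.sum_congr rfl fun k _ => by ring
      have h2 : m * ε * S z ≤ E z / 2 := by
        have := hε2 z
        have hms : 0 < m * S z := mul_pos hm0 (hSpos z)
        have h3 : m * S z * ε ≤ m * S z * (E z / (2 * m * S z)) :=
          mul_le_mul_of_nonneg_left this hms.le
        have h4 : m * S z * (E z / (2 * m * S z)) = E z / 2 := by
          have hS0 : S z ≠ 0 := (hSpos z).ne'
          have hm0' : m ≠ 0 := hm0.ne'
          field_simp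
        nlinarith [h3, h4]
      have := hEpos z
      linarith
    · -- strict core
      intro z
      have key : (∑ n ∈ Finset.univ.filter (fun n => zone n = z),
          ∑ k, (if zone n = z then t z else ε) * Δ n k) = t z * S z := by
        rw [hSdef, Finset.mul_sum]
        apply Finset.sum_congr rfl
        intro n hn
        rw [Finset.mem_filter] at hn
        rw [Finset.mul_sum]
        exact Finset.sum_congr rfl fun k _ => by rw [if_pos hn.2]
      rw [key]
      exact lt_of_le_of_lt (hCD z) (htS z)
end

section
/- Let the set of zones be 𝒵 = {1, 2}, and suppose zone 2 cannot cover its own demand: S_2 ≤ D_2. Assume the surplus of zone 1 strictly exceeds the deficit of zone 2, i.e. S_1 − D_1 > D_2 − S_2, that the deficit is strictly below zone 1's export limit, i.e. D_2 − S_2 < E_1, and moreover E_2 > 0, C_1 ≤ D_1 and C_2 < S_2. Then there exists a strictly feasible (Slater) point: a family x = (x^z_{n,k}) with 0 < x^z_{n,k} < 1 for all n, k, z such that the demand, capacity, export and core constraints all hold strictly (demand and core with strict '>', capacity and export with strict '<'). (Lemma 1, condition (ii): Slater's constraint qualification when one zone's deficit is covered by imports.) -/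
/-!
It suffices to look for allocations that depend only on the zone of the producer, i.e. a
`2 × 2` matrix `A i z` (the share of zone `i`'s offers sold to zone `z`); every constraint then
involves the bids only through the zonal capacities `S i`. Zones 1 and 2 are `0` and `1` in
Lean. At the boundary point where zone 1 serves its own demand exactly and exports exactly the
deficit `D₂ - S₂`, while zone 2 sells everything at home, the hypotheses leave slack in every
constraint that is not binding. Moving by `t > 0` in a direction that strictly improves the
binding ones gives a Slater point for small `t`.
-/

open Finset Filter Topology

section Zonal

variable {N Z : Type*} [Fintype N] [DecidableEq Z] {K : N → ℕ}

def zoneCapacity (zone : N → Z) (Δ : (n : N) → Fin (K n) → ℝ) (i : Z) : ℝ :=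
  ∑ n ∈ univ.filter (fun n => zone n = i), ∑ k, Δ n k

theorem sum_filter_zone_eq_mul_zoneCapacity (zone : N → Z) (Δ : (n : N) → Fin (K n) → ℝ)
    (a : Z → ℝ) (i : Z) :
    ∑ n ∈ univ.filter (fun n => zone n = i), ∑ k, a (zone n) * Δ n k =
      a i * zoneCapacity zone Δ i := by
  rw [zoneCapacity, mul_sum]
  refine sum_congr rfl fun n hn => ?_
  rw [(mem_filter.1 hn).2, mul_sum]

variable [Fintype Z]

def IsSlaterPoint (zone : N → Z) (Δ : (n : N) → Fin (K n) → ℝ) (D E C : Z → ℝ)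
    (x : (n : N) → Fin (K n) → Z → ℝ) : Prop :=
  (∀ n k z, 0 < x n k z ∧ x n k z < 1) ∧
  (∀ z, D z < ∑ n, ∑ k, x n k z * Δ n k) ∧
  (∀ n, ∀ k : Fin (K n), ∑ z, x n k z < 1) ∧
  (∀ z, ∑ n ∈ univ.filter (fun n => zone n = z),
      ∑ k, ∑ z' ∈ univ.filter (fun z' => z' ≠ z), x n k z' * Δ n k < E z) ∧
  (∀ z, C z < ∑ n ∈ univ.filter (fun n => zone n = z), ∑ k, x n k z * Δ n k)

structure IsZonalSlaterMatrix (S D E C : Z → ℝ) (A : Z → Z → ℝ) : Prop where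
  mem_Ioo : ∀ i z, 0 < A i z ∧ A i z < 1
  demand : ∀ z, D z < ∑ i, A i z * S i
  capacity : ∀ i, ∑ z, A i z < 1
  exports : ∀ z, (∑ z' ∈ univ.filter (fun z' => z' ≠ z), A z z') * S z < E z
  core : ∀ z, C z < A z z * S z

theorem sum_eq_sum_mul_zoneCapacity (zone : N → Z) (Δ : (n : N) → Fin (K n) → ℝ) (a : Z → ℝ) :
    ∑ n, ∑ k, a (zone n) * Δ n k = ∑ i, a i * zoneCapacity zone Δ i := by
  rw [← sum_fiberwise univ zone]
  exact sum_congr rfl fun i _ => sum_filter_zone_eq_mul_zoneCapacity zone Δ a i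

theorem IsZonalSlaterMatrix.isSlaterPoint {D E C : Z → ℝ} {A : Z → Z → ℝ} (zone : N → Z)
    (Δ : (n : N) → Fin (K n) → ℝ) (hA : IsZonalSlaterMatrix (zoneCapacity zone Δ) D E C A) :
    IsSlaterPoint zone Δ D E C fun n _ z => A (zone n) z := by
  refine ⟨fun n _ z => hA.mem_Ioo (zone n) z, fun z => ?_, fun n _ => hA.capacity (zone n),
    fun z => ?_, fun z => ?_⟩
  · exact (hA.demand z).trans_eq (sum_eq_sum_mul_zoneCapacity zone Δ (A · z)).symm
  · simp_rw [← sum_mul]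
    exact (sum_filter_zone_eq_mul_zoneCapacity zone Δ
      (fun i => ∑ z' ∈ univ.filter (· ≠ z), A i z') z).trans_lt (hA.exports z)
  · exact (hA.core z).trans_eq (sum_filter_zone_eq_mul_zoneCapacity zone Δ (A · z) z).symm

end Zonal

theorem eventually_nhdsGT_add_mul_lt {a c : ℝ} (b : ℝ) (h : a < c) :
    ∀ᶠ t in 𝓝[>] 0, a + t * b < c :=
  ((continuous_const.add (continuous_id.mul continuous_const)).tendsto' 0 a (by simp)
    |>.eventually_lt_const h).filter_mono nhdsWithin_le_nhds

section TwoZones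

variable {S D E C : Fin 2 → ℝ}

/- Zone 2 gives up the share `t` of its home sales, so zone 1 exports `t * S 1` more than the
deficit to compensate, plus `t` to make zone 2's demand constraint strict. -/
noncomputable def perturbedImportMatrix (S D : Fin 2 → ℝ) (t : ℝ) : Fin 2 → Fin 2 → ℝ :=
  ![![(D 0 + t) / S 0, (D 1 - S 1 + t * (1 + S 1)) / S 0], ![t / 2, 1 - t]]

theorem isZonalSlaterMatrix_perturbedImportMatrix {t : ℝ} (hD₀ : 0 ≤ D 0) (hS₁ : S 1 ≤ D 1)
    (hS₁₀ : 0 ≤ S 1) (hC₀ : C 0 ≤ D 0) (ht₀ : 0 < t) (ht₁ : t < 1)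
    (hrow : D 0 + (D 1 - S 1) + t * (2 + S 1) < S 0) (hexp₀ : D 1 - S 1 + t * (1 + S 1) < E 0)
    (hexp₁ : t * (S 1 / 2) < E 1) (hcore₁ : C 1 + t * S 1 < S 1) :
    IsZonalSlaterMatrix S D E C (perturbedImportMatrix S D t) := by
  have hS₀ : 0 < S 0 := by nlinarith
  have hne₀ : univ.filter (· ≠ (0 : Fin 2)) = {1} := by decide
  have hne₁ : univ.filter (· ≠ (1 : Fin 2)) = {0} := by decide
  constructor
  all_goals simp only [Fin.forall_fin_two, Fin.sum_univ_two, hne₀, hne₁, sum_singleton,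
    perturbedImportMatrix, Matrix.cons_val_zero, Matrix.cons_val_one, div_mul_cancel₀ _ hS₀.ne',
    ← add_div, div_lt_one hS₀, div_pos_iff_of_pos_right hS₀]
  all_goals and_intros
  all_goals nlinarith

theorem exists_isZonalSlaterMatrix_fin_two (hD₀ : 0 ≤ D 0) (hS₁ : S 1 ≤ D 1) (hS₁₀ : 0 ≤ S 1)
    (hsurplus : D 1 - S 1 < S 0 - D 0) (hexp : D 1 - S 1 < E 0) (hE₁ : 0 < E 1)
    (hC₀ : C 0 ≤ D 0) (hC₁ : C 1 < S 1) :
    ∃ A, IsZonalSlaterMatrix S D E C A := by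
  have hrow₀ : D 0 + (D 1 - S 1) < S 0 := by linarith
  obtain ⟨t, ht₀, ht₁, hrow, hexp₀, hexp₁, hcore₁⟩ :=
    ((eventually_nhdsWithin_of_forall fun _ h => h).and <|
      (eventually_nhdsGT_add_mul_lt 1 zero_lt_one).and <|
      (eventually_nhdsGT_add_mul_lt (2 + S 1) hrow₀).and <|
      (eventually_nhdsGT_add_mul_lt (1 + S 1) hexp).and <|
      (eventually_nhdsGT_add_mul_lt (S 1 / 2) hE₁).and
      (eventually_nhdsGT_add_mul_lt (S 1) hC₁)).exists
  rw [zero_add, mul_one] at ht₁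
  rw [zero_add] at hexp₁
  exact ⟨_, isZonalSlaterMatrix_perturbedImportMatrix hD₀ hS₁ hS₁₀ hC₀ ht₀ ht₁ hrow hexp₀ hexp₁
    hcore₁⟩

end TwoZones

theorem slater_condition_ii_general
    {N : Type*} [Fintype N]
    (zone : N → Fin 2) (K : N → ℕ)
    (Δ : (n : N) → Fin (K n) → ℝ)
    (D E C : Fin 2 → ℝ)
    (hD : ∀ z, 0 ≤ D z) (hC : ∀ z, 0 ≤ C z)
    -- zone 2 cannot cover its own demand : S₂ ≤ D₂
    (hS2 : ∑ n ∈ Finset.univ.filter (fun n => zone n = 1), ∑ k, Δ n k ≤ D 1)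
    -- surplus of zone 1 strictly exceeds the deficit of zone 2 : S₁ - D₁ > D₂ - S₂
    (hsurplus :
      D 1 - ∑ n ∈ Finset.univ.filter (fun n => zone n = 1), ∑ k, Δ n k <
        (∑ n ∈ Finset.univ.filter (fun n => zone n = 0), ∑ k, Δ n k) - D 0)
    -- the deficit is strictly below zone 1's export limit : D₂ - S₂ < E₁
    (hexp : D 1 - ∑ n ∈ Finset.univ.filter (fun n => zone n = 1), ∑ k, Δ n k < E 0)
    (hE2 : 0 < E 1)
    (hC1 : C 0 ≤ D 0)
    (hC2 : C 1 < ∑ n ∈ Finset.univ.filter (fun n => zone n = 1), ∑ k, Δ n k) :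
    ∃ x : (n : N) → Fin (K n) → Fin 2 → ℝ,
      (∀ n k z, 0 < x n k z ∧ x n k z < 1) ∧
      -- strict demand
      (∀ z, D z < ∑ n, ∑ k, x n k z * Δ n k) ∧
      -- strict capacity
      (∀ n, ∀ k : Fin (K n), ∑ z, x n k z < 1) ∧
      -- strict export
      (∀ z, ∑ n ∈ Finset.univ.filter (fun n => zone n = z),
          ∑ k, ∑ z' ∈ Finset.univ.filter (fun z' => z' ≠ z), x n k z' * Δ n k < E z) ∧
      -- strict core
      (∀ z, C z < ∑ n ∈ Finset.univ.filter (fun n => zone n = z),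
          ∑ k, x n k z * Δ n k) := by
  obtain ⟨A, hA⟩ := exists_isZonalSlaterMatrix_fin_two (S := zoneCapacity zone Δ) (hD 0) hS2
    ((hC 1).trans hC2.le) hsurplus hexp hE2 hC1 hC2
  exact ⟨_, hA.isSlaterPoint zone Δ⟩

/-- Lemma 1, condition (ii): Slater's constraint qualification for two zones
`𝒵 = {1,2}` when zone 2 cannot cover its own demand (`S₂ ≤ D₂`) but the
surplus of zone 1 strictly exceeds the deficit of zone 2, the deficit is
strictly below zone 1's export limit, `E₂ > 0`, `C₁ ≤ D₁` and `C₂ < S₂`: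
there is a strictly feasible point for the market operator's constraints. -/
theorem slater_condition_ii
    {N : Type*} [Fintype N]
    (zone : N → Fin 2) (K : N → ℕ)
    (Δ : (n : N) → Fin (K n) → ℝ)
    (D E C : Fin 2 → ℝ)
    (hΔ : ∀ n k, 0 ≤ Δ n k)
    (hD : ∀ z, 0 ≤ D z) (hE : ∀ z, 0 ≤ E z) (hC : ∀ z, 0 ≤ C z)
    -- zone 2 cannot cover its own demand : S₂ ≤ D₂
    (hS2 : ∑ n ∈ Finset.univ.filter (fun n => zone n = 1), ∑ k, Δ n k ≤ D 1)
    -- surplus of zone 1 strictly exceeds the deficit of zone 2 : S₁ - D₁ > D₂ - S₂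
    (hsurplus :
      D 1 - ∑ n ∈ Finset.univ.filter (fun n => zone n = 1), ∑ k, Δ n k <
        (∑ n ∈ Finset.univ.filter (fun n => zone n = 0), ∑ k, Δ n k) - D 0)
    -- the deficit is strictly below zone 1's export limit : D₂ - S₂ < E₁
    (hexp : D 1 - ∑ n ∈ Finset.univ.filter (fun n => zone n = 1), ∑ k, Δ n k < E 0)
    (hE2 : 0 < E 1)
    (hC1 : C 0 ≤ D 0)
    (hC2 : C 1 < ∑ n ∈ Finset.univ.filter (fun n => zone n = 1), ∑ k, Δ n k) :
    ∃ x : (n : N) → Fin (K n) → Fin 2 → ℝ,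
      (∀ n k z, 0 < x n k z ∧ x n k z < 1) ∧
      -- strict demand
      (∀ z, D z < ∑ n, ∑ k, x n k z * Δ n k) ∧
      -- strict capacity
      (∀ n, ∀ k : Fin (K n), ∑ z, x n k z < 1) ∧
      -- strict export
      (∀ z, ∑ n ∈ Finset.univ.filter (fun n => zone n = z),
          ∑ k, ∑ z' ∈ Finset.univ.filter (fun z' => z' ≠ z), x n k z' * Δ n k < E z) ∧
      -- strict core
      (∀ z, C z < ∑ n ∈ Finset.univ.filter (fun n => zone n = z),
          ∑ k, x n k z * Δ n k) :=
  slater_condition_ii_general zone K Δ D E C hD hC hS2 hsurplus hexp hE2 hC1 hC2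
end

section
/- Consider a generalized potential game with finitely many players, where player n's strategy lies in ℝ^{d_n}, its payoff is a continuous function J_n : ℝ^{d_n} → ℝ of its own strategy block, and the joint feasible set Ω ⊆ ∏_{n∈𝒩} ℝ^{d_n} is nonempty and compact. Then a generalized Nash equilibrium exists: there is w* ∈ Ω such that for every player n and every v ∈ ℝ^{d_n} for which the profile obtained from w* by replacing w*_n with v lies in Ω, one has J_n(v) ≤ J_n(w*_n). (Existence of a market equilibrium, Theorem 1, via the generalized potential structure of Γ established in Proposition 2.) -/
/-- Existence of a market equilibrium (Theorem 1, via the generalized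
potential structure): in a generalized potential game with finitely many
players, continuous own-strategy payoffs `Jₙ : ℝ^{dₙ} → ℝ` and a nonempty
compact joint feasible set `Ω`, a generalized Nash equilibrium exists. -/
theorem exists_GNE_of_potential_game
    {ι : Type*} [Fintype ι] [DecidableEq ι]
    (d : ι → ℕ)
    (J : (n : ι) → (Fin (d n) → ℝ) → ℝ)
    (hJ : ∀ n, Continuous (J n))
    (Ω : Set ((n : ι) → Fin (d n) → ℝ))
    (hne : Ω.Nonempty) (hcomp : IsCompact Ω) :
    ∃ wstar ∈ Ω, ∀ (n : ι) (v : Fin (d n) → ℝ),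
      Function.update wstar n v ∈ Ω → J n v ≤ J n (wstar n) := by
  set Φ : ((n : ι) → Fin (d n) → ℝ) → ℝ := fun w => ∑ n, J n (w n) with hΦ
  have hΦc : Continuous Φ :=
    continuous_finset_sum _ fun n _ => (hJ n).comp (continuous_apply n)
  obtain ⟨wstar, hw, hmax⟩ := hcomp.exists_isMaxOn hne hΦc.continuousOn
  refine ⟨wstar, hw, fun n v hv => ?_⟩
  have h := hmax hv
  simp only [Φ, Set.mem_setOf_eq] at h
  have hsum : ∀ m, m ≠ n → J m (Function.update wstar n v m) = J m (wstar m) := by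
    intro m hm; rw [Function.update_of_ne hm]
  have h1 : ∑ m, J m (Function.update wstar n v m)
      = J n v + ∑ m ∈ Finset.univ.erase n, J m (wstar m) := by
    rw [← Finset.add_sum_erase _ _ (Finset.mem_univ n), Function.update_self]
    congr 1
    exact Finset.sum_congr rfl fun m hm => hsum m (Finset.ne_of_mem_erase hm)
  have h2 : ∑ m, J m (wstar m)
      = J n (wstar n) + ∑ m ∈ Finset.univ.erase n, J m (wstar m) :=
    (Finset.add_sum_erase _ _ (Finset.mem_univ n)).symm
  rw [h1, h2] at h
  linarith
end
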